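/- The element $y = :c\beta\gamma: + \frac32\partial c$ of the semi-infinite Weil complex $\mathcal W$ satisfies $[Q,y]=0$, i.e., $y$ is a BRST cocycle of $bc$-ghost number $1$ and $\beta\gamma$-ghost number $0$. -/
import Mathlib


open scoped BigOperators

/-- Generalized binomial coefficient `m choose j` for an integer `m`, as a complex number. -/
noncomputable def zchoose (m : ℤ) (j : ℕ) : ℂ :=
  (∏ i ∈ Finset.range j, ((m : ℂ) - (i : ℂ))) / (Nat.factorial j : ℂ)

/-- A vertex superalgebra presented via its circle products `∘ₙ`, in the sense of
Lian-Zuckerman (a commutative quantum operator algebra).  The parity grading is recorded by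
the submodules `even`, `odd`; `comm_even`/`comm_odd` encode the Borcherds commutator formula
for the Fourier modes acting on the left regular module, and `iterate_even`/`iterate_odd`
encode the iterate (associativity) formula. -/
structure VA (V : Type) [AddCommGroup V] [Module ℂ V] where
  circ : ℤ → V →ₗ[ℂ] V →ₗ[ℂ] V
  one : V
  even : Submodule ℂ V
  odd : Submodule ℂ V
  one_even : one ∈ even
  circ_ee : ∀ (n : ℤ) {a b : V}, a ∈ even → b ∈ even → circ n a b ∈ even
  circ_oo : ∀ (n : ℤ) {a b : V}, a ∈ odd → b ∈ odd → circ n a b ∈ even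
  circ_eo : ∀ (n : ℤ) {a b : V}, a ∈ even → b ∈ odd → circ n a b ∈ odd
  circ_oe : ∀ (n : ℤ) {a b : V}, a ∈ odd → b ∈ even → circ n a b ∈ odd
  unit_left : ∀ (n : ℤ) (a : V), circ n one a = if n = -1 then a else 0
  unit_right_wick : ∀ a : V, circ (-1) a one = a
  unit_right_nonneg : ∀ (n : ℤ) (a : V), 0 ≤ n → circ n a one = 0
  truncate : ∀ a b : V, ∃ N : ℕ, ∀ n : ℤ, (N : ℤ) ≤ n → circ n a b = 0
  comm_even : ∀ {a b : V}, (a ∈ even ∨ b ∈ even) → ∀ (m n : ℤ) (c : V),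
    circ m a (circ n b c) - circ n b (circ m a c)
      = ∑ᶠ j : ℕ, zchoose m j • circ (m + n - (j : ℤ)) (circ (j : ℤ) a b) c
  comm_odd : ∀ {a b : V}, a ∈ odd → b ∈ odd → ∀ (m n : ℤ) (c : V),
    circ m a (circ n b c) + circ n b (circ m a c)
      = ∑ᶠ j : ℕ, zchoose m j • circ (m + n - (j : ℤ)) (circ (j : ℤ) a b) c
  iterate_even : ∀ {a b : V}, (a ∈ even ∨ b ∈ even) → ∀ (m n : ℤ) (c : V),
    circ m (circ n a b) c
      = ∑ᶠ j : ℕ, ((-1 : ℂ) ^ j * zchoose n j) •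
          (circ (n - (j : ℤ)) a (circ (m + (j : ℤ)) b c)
            - ((-1 : ℂ) ^ n) • circ (n + m - (j : ℤ)) b (circ (j : ℤ) a c))
  iterate_odd : ∀ {a b : V}, a ∈ odd → b ∈ odd → ∀ (m n : ℤ) (c : V),
    circ m (circ n a b) c
      = ∑ᶠ j : ℕ, ((-1 : ℂ) ^ j * zchoose n j) •
          (circ (n - (j : ℤ)) a (circ (m + (j : ℤ)) b c)
            + ((-1 : ℂ) ^ n) • circ (n + m - (j : ℤ)) b (circ (j : ℤ) a c))

namespace VA

variable {V : Type} [AddCommGroup V] [Module ℂ V] (A : VA V)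

/-- The formal derivative `∂a = a ∘₋₂ 1`. -/
def D (a : V) : V := A.circ (-2) a A.one

/-- The Wick (normally ordered) product `:ab: = a ∘₋₁ b`. -/
def wick (a b : V) : V := A.circ (-1) a b

end VA

namespace VA

/-- Iterated (right-normalized) Wick product of a list of elements. -/
def wlist {V : Type} [AddCommGroup V] [Module ℂ V] (A : VA V) : List V → V
  | [] => A.one
  | a :: l => A.wick a (wlist A l)

/-- Iterated Wick power. -/
def wpow {V : Type} [AddCommGroup V] [Module ℂ V] (A : VA V) (a : V) : ℕ → V
  | 0 => A.one
  | k + 1 => A.wick a (wpow A a k)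

end VA



section ZChoose

lemma zchoose_zero (m : ℤ) : zchoose m 0 = 1 := by simp [zchoose]

lemma zchoose_succ (m : ℤ) (j : ℕ) :
    zchoose m (j+1) = zchoose m j * (((m : ℂ) - j) / (j+1)) := by
  unfold zchoose
  rw [Finset.prod_range_succ, Nat.factorial_succ, div_mul_div_comm]
  push_cast
  congr 1
  ring

lemma zchoose_zero_succ (j : ℕ) : zchoose 0 (j+1) = 0 := by
  unfold zchoose
  rw [Finset.prod_eq_zero (Finset.mem_range.2 (Nat.succ_pos j)) (by simp)]
  simp

lemma zchoose_zero_left (j : ℕ) (hj : 1 ≤ j) : zchoose 0 j = 0 := by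
  obtain ⟨k, rfl⟩ := Nat.exists_eq_add_of_le hj
  simpa [Nat.add_comm] using zchoose_zero_succ k

lemma natcast_succ_ne_zero (k : ℕ) : ((k : ℂ) + 1) ≠ 0 := by
  intro h; have := congrArg Complex.re h; simp at this
  linarith [Nat.cast_nonneg (α := ℝ) k]

lemma zchoose_neg_one (j : ℕ) : zchoose (-1) j = (-1)^j := by
  induction j with
  | zero => simp [zchoose_zero]
  | succ k ih =>
    rw [zchoose_succ, ih]
    have h2 := natcast_succ_ne_zero k
    push_cast
    field_simp
    ring

lemma zchoose_neg_two (j : ℕ) : zchoose (-2) j = (-1)^j * ((j:ℂ)+1) := by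
  induction j with
  | zero => simp [zchoose_zero]
  | succ k ih =>
    rw [zchoose_succ, ih]
    have h2 := natcast_succ_ne_zero k
    push_cast
    field_simp
    ring

lemma finsum_range {M : Type*} [AddCommMonoid M] (f : ℕ → M) (N : ℕ)
    (h : ∀ j, N ≤ j → f j = 0) : ∑ᶠ j, f j = ∑ j ∈ Finset.range N, f j := by
  apply finsum_eq_finset_sum_of_support_subset
  intro x hx
  simp only [Function.mem_support] at hx
  simp only [Finset.coe_range, Set.mem_Iio]
  by_contra hc
  exact hx (h x (le_of_not_gt hc))

end ZChoose

section AuxVA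

variable {V : Type} [AddCommGroup V] [Module ℂ V] (A : VA V)

lemma neg_one_pow_sq (j : ℕ) : ((-1:ℂ)^j * (-1)^j) = 1 := by
  rw [← pow_add, ← two_mul, pow_mul]; norm_num

/-- Modes of a derivative: `(∂a)ₘ x = -m • a_{m-1} x`. -/
lemma D_mode (a x : V) (m : ℤ) :
    A.circ m (A.circ (-2) a A.one) x = (-(m:ℂ)) • A.circ (m-1) a x := by
  rw [A.iterate_even (Or.inr A.one_even) m (-2) x]
  have hz : ((-1:ℂ)^(-2:ℤ)) = 1 := by norm_num
  rcases lt_trichotomy m 0 with hm | hm | hm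
  · set j0 : ℕ := (-1-m).toNat with hj0
    have hj0z : (j0 : ℤ) = -1 - m := Int.toNat_of_nonneg (by omega)
    rw [finsum_eq_single _ j0 ?_]
    · have e1 : (m + (j0:ℤ)) = -1 := by omega
      have e3 : ((-2:ℤ) - (j0:ℤ)) = m - 1 := by omega
      have e2 : ¬ ((-2:ℤ) + m - (j0:ℤ) = -1) := by omega
      rw [A.unit_left, A.unit_left, if_pos e1, if_neg e2, e3, zchoose_neg_two, hz]
      have hcc : ((j0:ℂ)) = -1 - (m:ℂ) := by exact_mod_cast congrArg (fun z : ℤ => (z:ℂ)) hj0z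
      rw [smul_zero, sub_zero, ← mul_assoc, neg_one_pow_sq, one_mul, hcc]
      rw [show (-1 - (m:ℂ) + 1) = -(m:ℂ) by ring]
    · intro j hj
      have hjz : (j:ℤ) ≠ (j0:ℤ) := by exact_mod_cast hj
      have e1 : ¬ (m + (j:ℤ) = -1) := by omega
      have e2 : ¬ ((-2:ℤ) + m - (j:ℤ) = -1) := by omega
      rw [A.unit_left, A.unit_left, if_neg e1, if_neg e2]
      simp
  · subst hm
    rw [finsum_eq_zero_of_forall_eq_zero ?_]
    · simp
    · intro j
      have e1 : ¬ ((0:ℤ) + (j:ℤ) = -1) := by omega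
      have e2 : ¬ ((-2:ℤ) + 0 - (j:ℤ) = -1) := by omega
      rw [A.unit_left, A.unit_left, if_neg e1, if_neg e2]
      simp
  · set j0 : ℕ := (m-1).toNat with hj0
    have hj0z : (j0 : ℤ) = m - 1 := Int.toNat_of_nonneg (by omega)
    rw [finsum_eq_single _ j0 ?_]
    · have e1 : ¬ (m + (j0:ℤ) = -1) := by omega
      have e2 : ((-2:ℤ) + m - (j0:ℤ)) = -1 := by omega
      rw [A.unit_left, A.unit_left, if_neg e1, if_pos e2, hj0z, zchoose_neg_two, hz]
      have hcc : ((j0:ℂ)) = (m:ℂ) - 1 := by exact_mod_cast congrArg (fun z : ℤ => (z:ℂ)) hj0z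
      rw [map_zero, zero_sub, one_smul, ← mul_assoc, neg_one_pow_sq, one_mul, hcc, smul_neg, ← neg_smul]
      rw [show -((m:ℂ) - 1 + 1) = -(m:ℂ) by ring]
    · intro j hj
      have hjz : (j:ℤ) ≠ (j0:ℤ) := by exact_mod_cast hj
      have e1 : ¬ (m + (j:ℤ) = -1) := by omega
      have e2 : ¬ ((-2:ℤ) + m - (j:ℤ) = -1) := by omega
      rw [A.unit_left, A.unit_left, if_neg e1, if_neg e2]
      simp

lemma comm_gen_even {p q : V} (h : p ∈ A.even ∨ q ∈ A.even) (e : V)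
    (h0 : A.circ 0 p q = e) (h1 : ∀ j : ℤ, 1 ≤ j → A.circ j p q = 0)
    (m n : ℤ) (x : V) :
    A.circ m p (A.circ n q x) = A.circ n q (A.circ m p x) + A.circ (m + n) e x := by
  have hc := A.comm_even h m n x
  have hs : (∑ᶠ j : ℕ, zchoose m j • A.circ (m + n - (j:ℤ)) (A.circ (j:ℤ) p q) x)
      = A.circ (m+n) e x := by
    rw [finsum_eq_single _ 0 ?_]
    · simp [zchoose_zero, h0]
    · intro j hj
      rw [h1 (j:ℤ) (by exact_mod_cast Nat.one_le_iff_ne_zero.2 hj)]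
      simp
  rw [hs] at hc
  rw [sub_eq_iff_eq_add] at hc
  rw [hc]; try abel

lemma comm_gen_odd {p q : V} (hp : p ∈ A.odd) (hq : q ∈ A.odd) (e : V)
    (h0 : A.circ 0 p q = e) (h1 : ∀ j : ℤ, 1 ≤ j → A.circ j p q = 0)
    (m n : ℤ) (x : V) :
    A.circ m p (A.circ n q x) = -A.circ n q (A.circ m p x) + A.circ (m + n) e x := by
  have hc := A.comm_odd hp hq m n x
  have hs : (∑ᶠ j : ℕ, zchoose m j • A.circ (m + n - (j:ℤ)) (A.circ (j:ℤ) p q) x)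
      = A.circ (m+n) e x := by
    rw [finsum_eq_single _ 0 ?_]
    · simp [zchoose_zero, h0]
    · intro j hj
      rw [h1 (j:ℤ) (by exact_mod_cast Nat.one_le_iff_ne_zero.2 hj)]
      simp
  rw [hs] at hc
  have := eq_sub_of_add_eq hc
  rw [this]; try abel

lemma Qd_even (Jv : V) {a : V} (ha : a ∈ A.even) (n : ℤ) (x : V) :
    A.circ 0 Jv (A.circ n a x)
      = A.circ n (A.circ 0 Jv a) x + A.circ n a (A.circ 0 Jv x) := by
  have hc := A.comm_even (a := Jv) (b := a) (Or.inr ha) 0 n x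
  have hs : (∑ᶠ j : ℕ, zchoose 0 j • A.circ (0 + n - (j:ℤ)) (A.circ (j:ℤ) Jv a) x)
      = A.circ n (A.circ 0 Jv a) x := by
    rw [finsum_eq_single _ 0 ?_]
    · simp [zchoose_zero]
    · intro j hj
      rw [zchoose_zero_left j (Nat.one_le_iff_ne_zero.2 hj)]
      simp
  rw [hs] at hc
  rw [sub_eq_iff_eq_add] at hc
  rw [hc]; try abel

lemma Qd_odd {Jv : V} (hJ : Jv ∈ A.odd) {a : V} (ha : a ∈ A.odd) (n : ℤ) (x : V) :
    A.circ 0 Jv (A.circ n a x)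
      = A.circ n (A.circ 0 Jv a) x - A.circ n a (A.circ 0 Jv x) := by
  have hc := A.comm_odd hJ ha 0 n x
  have hs : (∑ᶠ j : ℕ, zchoose 0 j • A.circ (0 + n - (j:ℤ)) (A.circ (j:ℤ) Jv a) x)
      = A.circ n (A.circ 0 Jv a) x := by
    rw [finsum_eq_single _ 0 ?_]
    · simp [zchoose_zero]
    · intro j hj
      rw [zchoose_zero_left j (Nat.one_le_iff_ne_zero.2 hj)]
      simp
  rw [hs] at hc
  have := eq_sub_of_add_eq hc
  rw [this]

lemma mode1_even {a b : V} (h : a ∈ A.even ∨ b ∈ A.even) (m : ℤ) (x : V) :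
    A.circ m (A.circ (-1) a b) x
      = ∑ᶠ j : ℕ, (A.circ (-1 - (j:ℤ)) a (A.circ (m + (j:ℤ)) b x)
          + A.circ (-1 + m - (j:ℤ)) b (A.circ (j:ℤ) a x)) := by
  rw [A.iterate_even h m (-1) x]
  apply finsum_congr
  intro j
  rw [zchoose_neg_one]
  rw [show ((-1:ℂ)^(-1:ℤ)) = -1 by norm_num]
  rw [neg_one_pow_sq, one_smul, neg_one_smul, sub_neg_eq_add]

lemma mode1_odd {a b : V} (ha : a ∈ A.odd) (hb : b ∈ A.odd) (m : ℤ) (x : V) :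
    A.circ m (A.circ (-1) a b) x
      = ∑ᶠ j : ℕ, (A.circ (-1 - (j:ℤ)) a (A.circ (m + (j:ℤ)) b x)
          - A.circ (-1 + m - (j:ℤ)) b (A.circ (j:ℤ) a x)) := by
  rw [A.iterate_odd ha hb m (-1) x]
  apply finsum_congr
  intro j
  rw [zchoose_neg_one]
  rw [show ((-1:ℂ)^(-1:ℤ)) = -1 by norm_num]
  rw [neg_one_pow_sq, one_smul, neg_one_smul, ← sub_eq_add_neg]

lemma mode2_even {a b : V} (h : a ∈ A.even ∨ b ∈ A.even) (m : ℤ) (x : V) :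
    A.circ m (A.circ (-2) a b) x
      = ∑ᶠ j : ℕ, ((j:ℂ)+1) • (A.circ (-2 - (j:ℤ)) a (A.circ (m + (j:ℤ)) b x)
          - A.circ (-2 + m - (j:ℤ)) b (A.circ (j:ℤ) a x)) := by
  rw [A.iterate_even h m (-2) x]
  apply finsum_congr
  intro j
  rw [zchoose_neg_two]
  rw [show ((-1:ℂ)^(-2:ℤ)) = 1 by norm_num]
  rw [one_smul, ← mul_assoc, neg_one_pow_sq, one_mul]

lemma mode2_odd {a b : V} (ha : a ∈ A.odd) (hb : b ∈ A.odd) (m : ℤ) (x : V) :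
    A.circ m (A.circ (-2) a b) x
      = ∑ᶠ j : ℕ, ((j:ℂ)+1) • (A.circ (-2 - (j:ℤ)) a (A.circ (m + (j:ℤ)) b x)
          + A.circ (-2 + m - (j:ℤ)) b (A.circ (j:ℤ) a x)) := by
  rw [A.iterate_odd ha hb m (-2) x]
  apply finsum_congr
  intro j
  rw [zchoose_neg_two]
  rw [show ((-1:ℂ)^(-2:ℤ)) = 1 by norm_num]
  rw [one_smul, ← mul_assoc, neg_one_pow_sq, one_mul]

end AuxVA
/-- The element `y = :cβγ: + (3/2)∂c` of the semi-infinite Weil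
complex is a BRST cocycle: `[Q, y] = 0`. -/
theorem stmt12 (V : Type) [AddCommGroup V] [Module ℂ V] (A : VA V)
    (b c β γ : V)
    (hb : b ∈ A.odd) (hc : c ∈ A.odd)
    (hbc0 : A.circ 0 b c = A.one) (hbc : ∀ n : ℤ, 1 ≤ n → A.circ n b c = 0)
    (hcb0 : A.circ 0 c b = A.one) (hcb : ∀ n : ℤ, 1 ≤ n → A.circ n c b = 0)
    (hbb : ∀ n : ℤ, 0 ≤ n → A.circ n b b = 0)
    (hcc : ∀ n : ℤ, 0 ≤ n → A.circ n c c = 0)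
    (hβ : β ∈ A.even) (hγ : γ ∈ A.even)
    (hβγ0 : A.circ 0 β γ = A.one) (hβγ : ∀ n : ℤ, 1 ≤ n → A.circ n β γ = 0)
    (hγβ0 : A.circ 0 γ β = -A.one) (hγβ : ∀ n : ℤ, 1 ≤ n → A.circ n γ β = 0)
    (hββ : ∀ n : ℤ, 0 ≤ n → A.circ n β β = 0)
    (hγγ : ∀ n : ℤ, 0 ≤ n → A.circ n γ γ = 0)
    (hcross : ∀ n : ℤ, 0 ≤ n →
      A.circ n b β = 0 ∧ A.circ n b γ = 0 ∧ A.circ n c β = 0 ∧ A.circ n c γ = 0 ∧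
      A.circ n β b = 0 ∧ A.circ n γ b = 0 ∧ A.circ n β c = 0 ∧ A.circ n γ c = 0)
    (LS LE LW J : V)
    (hLS : LS = A.wick (A.D β) γ + (2 : ℂ) • A.wick β (A.D γ))
    (hLE : LE = -(A.wick (A.D b) c) - (2 : ℂ) • A.wick b (A.D c))
    (hLW : LW = LE + LS)
    (hJ : J = A.wick (LS + (1 / 2 : ℂ) • LE) c + (3 / 4 : ℂ) • A.D (A.D c))
    (y : V) (hy : y = A.wick c (A.wick β γ) + (3 / 2 : ℂ) • A.D c)
    :
    A.circ 0 J y = 0 := by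
  -- circ-form of the defining equations
  have hLS' : LS = A.circ (-1) (A.circ (-2) β A.one) γ
      + (2:ℂ) • A.circ (-1) β (A.circ (-2) γ A.one) := hLS
  have hLE' : LE = -(A.circ (-1) (A.circ (-2) b A.one) c)
      - (2:ℂ) • A.circ (-1) b (A.circ (-2) c A.one) := hLE
  have hJ' : J = A.circ (-1) (LS + (1/2:ℂ) • LE) c
      + (3/4:ℂ) • A.circ (-2) (A.circ (-2) c A.one) A.one := hJ
  have hy' : y = A.circ (-1) c (A.circ (-1) β γ) + (3/2:ℂ) • A.circ (-2) c A.one := hy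
  -- parity bookkeeping
  have hDβ : A.circ (-2) β A.one ∈ A.even := A.circ_ee _ hβ A.one_even
  have hDγ : A.circ (-2) γ A.one ∈ A.even := A.circ_ee _ hγ A.one_even
  have hDb : A.circ (-2) b A.one ∈ A.odd := A.circ_oe _ hb A.one_even
  have hDc : A.circ (-2) c A.one ∈ A.odd := A.circ_oe _ hc A.one_even
  have hLSe : LS ∈ A.even := by
    rw [hLS']
    exact Submodule.add_mem _ (A.circ_ee _ hDβ hγ)
      (Submodule.smul_mem _ _ (A.circ_ee _ hβ hDγ))
  have hLEe : LE ∈ A.even := by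
    rw [hLE']
    exact Submodule.sub_mem _ (Submodule.neg_mem _ (A.circ_oo _ hDb hc))
      (Submodule.smul_mem _ _ (A.circ_oo _ hb hDc))
  have hLve : LS + (1/2:ℂ) • LE ∈ A.even :=
    Submodule.add_mem _ hLSe (Submodule.smul_mem _ _ hLEe)
  have hJo : J ∈ A.odd := by
    rw [hJ']
    exact Submodule.add_mem _ (A.circ_eo _ hLve hc)
      (Submodule.smul_mem _ _ (A.circ_oe _ (A.circ_oe _ hc A.one_even) A.one_even))
  -- cross-vanishing shorthands
  have hbβ' : ∀ n:ℤ, 0 ≤ n → A.circ n b β = 0 := fun n hn => (hcross n hn).1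
  have hbγ' : ∀ n:ℤ, 0 ≤ n → A.circ n b γ = 0 := fun n hn => (hcross n hn).2.1
  have hcβ' : ∀ n:ℤ, 0 ≤ n → A.circ n c β = 0 := fun n hn => (hcross n hn).2.2.1
  have hcγ' : ∀ n:ℤ, 0 ≤ n → A.circ n c γ = 0 := fun n hn => (hcross n hn).2.2.2.1
  have hβb' : ∀ n:ℤ, 0 ≤ n → A.circ n β b = 0 := fun n hn => (hcross n hn).2.2.2.2.1
  have hγb' : ∀ n:ℤ, 0 ≤ n → A.circ n γ b = 0 := fun n hn => (hcross n hn).2.2.2.2.2.1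
  have hβc' : ∀ n:ℤ, 0 ≤ n → A.circ n β c = 0 := fun n hn => (hcross n hn).2.2.2.2.2.2.1
  have hγc' : ∀ n:ℤ, 0 ≤ n → A.circ n γ c = 0 := fun n hn => (hcross n hn).2.2.2.2.2.2.2
  -- kill lemmas for derivative modes
  have killD : ∀ (p q : V) (k : ℤ), 0 ≤ k → (∀ n:ℤ, 0 ≤ n → A.circ n p q = 0) →
      A.circ k (A.circ (-2) p A.one) q = 0 := by
    intro p q k hk hvan
    rw [D_mode]
    rcases eq_or_lt_of_le hk with h | h
    · rw [← h]; norm_num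
    · rw [hvan (k-1) (by omega), smul_zero]
  have killD0 : ∀ (p q : V), A.circ 0 (A.circ (-2) p A.one) q = 0 := by
    intro p q; rw [D_mode]; norm_num
  have killD1 : ∀ (p q : V) (k : ℤ), 2 ≤ k → (∀ n:ℤ, 1 ≤ n → A.circ n p q = 0) →
      A.circ k (A.circ (-2) p A.one) q = 0 := by
    intro p q k hk hvan
    rw [D_mode, hvan (k-1) (by omega), smul_zero]
  -- c commutes with βγ-monomials
  have hcu : ∀ m:ℤ, 0 ≤ m → A.circ m c (A.circ (-1) β γ) = 0 := by
    intro m hm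
    rw [comm_gen_even A (p := c) (q := β) (Or.inr hβ) 0 (hcβ' 0 le_rfl)
      (fun j hj => hcβ' j (by omega)) m (-1) γ]
    rw [hcγ' m hm]
    simp
  -- c anticommutes with itself
  have hanti : ∀ (m n:ℤ) (x : V), A.circ m c (A.circ n c x) = -A.circ n c (A.circ m c x) := by
    intro m n x
    rw [comm_gen_odd A hc hc 0 (hcc 0 le_rfl) (fun j hj => hcc j (by omega)) m n x]
    simp
  have hsq : ∀ (n:ℤ) (x : V), A.circ n c (A.circ n c x) = 0 := by
    intro n x
    have h := hanti n n x
    have h2 : (2:ℂ) • A.circ n c (A.circ n c x) = 0 := by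
      rw [two_smul]
      nth_rewrite 1 [h]
      simp
    calc A.circ n c (A.circ n c x) = (2⁻¹:ℂ) • ((2:ℂ) • A.circ n c (A.circ n c x)) := by
          rw [smul_smul]; norm_num
      _ = 0 := by rw [h2, smul_zero]
  -- β commutes with c-monomials
  have hβcomm : ∀ (m n:ℤ) (x:V), A.circ m β (A.circ n c x) = A.circ n c (A.circ m β x) := by
    intro m n x
    rw [comm_gen_even A (p := β) (q := c) (Or.inl hβ) 0 (hβc' 0 le_rfl)
      (fun j hj => hβc' j (by omega)) m n x]
    simp
  -- ================= modes of the Virasoro pieces =================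
  have p1γ : ∀ m : ℤ, 0 ≤ m →
      A.circ m (A.circ (-1) (A.circ (-2) β A.one) γ) γ = -(A.circ (m-2) γ A.one) := by
    intro m hm
    rw [mode1_even A (Or.inl hDβ), finsum_range _ 2 ?_]
    · rw [Finset.sum_range_succ, Finset.sum_range_succ, Finset.sum_range_zero]
      simp only [Nat.cast_zero, Nat.cast_one, add_zero, sub_zero, zero_add]
      rw [hγγ m hm, hγγ (m+1) (by omega), map_zero, map_zero, killD0, map_zero, D_mode]
      rw [show ((1:ℤ) - 1) = 0 by norm_num, hβγ0]
      rw [show ((-1:ℤ) + m - 1) = m - 2 by ring]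
      simp
    · intro j hj
      rw [hγγ (m + (j:ℤ)) (by omega), map_zero, killD1 β γ (j:ℤ) (by omega) hβγ,
        map_zero, add_zero]
  have p2γ : ∀ m : ℤ, 0 ≤ m →
      A.circ m (A.circ (-1) β (A.circ (-2) γ A.one)) γ
        = ((1:ℂ) - (m:ℂ)) • A.circ (m-2) γ A.one := by
    intro m hm
    rw [mode1_even A (Or.inl hβ), finsum_range _ 1 ?_]
    · rw [Finset.sum_range_succ, Finset.sum_range_zero]
      simp only [Nat.cast_zero, Nat.cast_one, add_zero, sub_zero, zero_add]
      rw [killD γ γ m hm hγγ, map_zero, hβγ0, D_mode]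
      rw [show ((-1:ℤ) + m - 1) = m - 2 by ring]
      push_cast
      module
    · intro j hj
      rw [killD γ γ (m + (j:ℤ)) (by omega) hγγ, map_zero, hβγ (j:ℤ) (by omega),
        map_zero, add_zero]
  have p1β : ∀ m : ℤ, 0 ≤ m →
      A.circ m (A.circ (-1) (A.circ (-2) β A.one) γ) β
        = A.circ (-2) β (A.circ m γ β) := by
    intro m hm
    rw [mode1_even A (Or.inl hDβ), finsum_range _ 1 ?_]
    · rw [Finset.sum_range_succ, Finset.sum_range_zero]
      simp only [Nat.cast_zero, add_zero, sub_zero, zero_add]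
      rw [killD0, map_zero, add_zero, D_mode]
      norm_num
    · intro j hj
      rw [hγβ (m + (j:ℤ)) (by omega), map_zero, D_mode, hββ ((j:ℤ)-1) (by omega),
        smul_zero, map_zero, add_zero]
  have p2β0 : A.circ 0 (A.circ (-1) β (A.circ (-2) γ A.one)) β = A.circ (-2) β A.one := by
    rw [mode1_even A (Or.inl hβ), finsum_range _ 2 ?_]
    · rw [Finset.sum_range_succ, Finset.sum_range_succ, Finset.sum_range_zero]
      simp only [Nat.cast_zero, Nat.cast_one, add_zero, sub_zero, zero_add]
      rw [killD0, map_zero, hββ 0 le_rfl, map_zero, hββ 1 (by norm_num), map_zero,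
        D_mode, show ((1:ℤ) - 1) = 0 by norm_num, hγβ0,
        show ((-1:ℤ) - 1) = -2 by norm_num]
      simp
    · intro j hj
      rw [hββ (j:ℤ) (by omega), map_zero, D_mode, hγβ (0 + (j:ℤ) - 1) (by omega),
        smul_zero, map_zero, add_zero]
  have p2β1 : A.circ 1 (A.circ (-1) β (A.circ (-2) γ A.one)) β = β := by
    rw [mode1_even A (Or.inl hβ), finsum_range _ 1 ?_]
    · rw [Finset.sum_range_succ, Finset.sum_range_zero]
      simp only [Nat.cast_zero, add_zero, sub_zero, zero_add]
      rw [hββ 0 le_rfl, map_zero, add_zero, D_mode,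
        show ((1:ℤ) - 1) = 0 by norm_num, hγβ0]
      simp [A.unit_right_wick β]
    · intro j hj
      rw [hββ (j:ℤ) (by omega), map_zero, D_mode, hγβ (1 + (j:ℤ) - 1) (by omega),
        smul_zero, map_zero, add_zero]
  have p2β2 : ∀ m : ℤ, 2 ≤ m →
      A.circ m (A.circ (-1) β (A.circ (-2) γ A.one)) β = 0 := by
    intro m hm
    rw [mode1_even A (Or.inl hβ)]
    apply finsum_eq_zero_of_forall_eq_zero
    intro j
    rw [hββ (j:ℤ) (by omega), map_zero, D_mode, hγβ (m + (j:ℤ) - 1) (by omega),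
      smul_zero, map_zero, add_zero]
  have p1c : ∀ m : ℤ, 0 ≤ m →
      A.circ m (A.circ (-1) (A.circ (-2) β A.one) γ) c = 0 := by
    intro m hm
    rw [mode1_even A (Or.inl hDβ)]
    apply finsum_eq_zero_of_forall_eq_zero
    intro j
    rw [hγc' (m + (j:ℤ)) (by omega), map_zero, killD β c (j:ℤ) (by omega) hβc',
      map_zero, add_zero]
  have p2c : ∀ m : ℤ, 0 ≤ m →
      A.circ m (A.circ (-1) β (A.circ (-2) γ A.one)) c = 0 := by
    intro m hm
    rw [mode1_even A (Or.inl hβ)]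
    apply finsum_eq_zero_of_forall_eq_zero
    intro j
    rw [killD γ c (m + (j:ℤ)) (by omega) hγc', map_zero, hβc' (j:ℤ) (by omega),
      map_zero, add_zero]
  have p3c : ∀ m : ℤ, 0 ≤ m →
      A.circ m (A.circ (-1) (A.circ (-2) b A.one) c) c = A.circ (m-2) c A.one := by
    intro m hm
    rw [mode1_odd A hDb hc, finsum_range _ 2 ?_]
    · rw [Finset.sum_range_succ, Finset.sum_range_succ, Finset.sum_range_zero]
      simp only [Nat.cast_zero, Nat.cast_one, add_zero, sub_zero, zero_add]
      rw [hcc m hm, hcc (m+1) (by omega), map_zero, map_zero, killD0, map_zero, D_mode]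
      rw [show ((1:ℤ) - 1) = 0 by norm_num, hbc0]
      rw [show ((-1:ℤ) + m - 1) = m - 2 by ring]
      simp
    · intro j hj
      rw [hcc (m + (j:ℤ)) (by omega), map_zero, killD1 b c (j:ℤ) (by omega) hbc,
        map_zero, sub_zero]
  have p4c : ∀ m : ℤ, 0 ≤ m →
      A.circ m (A.circ (-1) b (A.circ (-2) c A.one)) c
        = ((m:ℂ) - 1) • A.circ (m-2) c A.one := by
    intro m hm
    rw [mode1_odd A hb hDc, finsum_range _ 1 ?_]
    · rw [Finset.sum_range_succ, Finset.sum_range_zero]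
      simp only [Nat.cast_zero, add_zero, sub_zero, zero_add]
      rw [killD c c m hm hcc, map_zero, hbc0, D_mode]
      rw [show ((-1:ℤ) + m - 1) = m - 2 by ring]
      push_cast
      module
    · intro j hj
      rw [killD c c (m + (j:ℤ)) (by omega) hcc, map_zero, hbc (j:ℤ) (by omega),
        map_zero, sub_zero]
  have p3β : ∀ m : ℤ, 0 ≤ m →
      A.circ m (A.circ (-1) (A.circ (-2) b A.one) c) β = 0 := by
    intro m hm
    rw [mode1_odd A hDb hc]
    apply finsum_eq_zero_of_forall_eq_zero
    intro j
    rw [hcβ' (m + (j:ℤ)) (by omega), map_zero, killD b β (j:ℤ) (by omega) hbβ',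
      map_zero, sub_zero]
  have p4β : ∀ m : ℤ, 0 ≤ m →
      A.circ m (A.circ (-1) b (A.circ (-2) c A.one)) β = 0 := by
    intro m hm
    rw [mode1_odd A hb hDc]
    apply finsum_eq_zero_of_forall_eq_zero
    intro j
    rw [killD c β (m + (j:ℤ)) (by omega) hcβ', map_zero, hbβ' (j:ℤ) (by omega),
      map_zero, sub_zero]
  have p3γ : ∀ m : ℤ, 0 ≤ m →
      A.circ m (A.circ (-1) (A.circ (-2) b A.one) c) γ = 0 := by
    intro m hm
    rw [mode1_odd A hDb hc]
    apply finsum_eq_zero_of_forall_eq_zero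
    intro j
    rw [hcγ' (m + (j:ℤ)) (by omega), map_zero, killD b γ (j:ℤ) (by omega) hbγ',
      map_zero, sub_zero]
  have p4γ : ∀ m : ℤ, 0 ≤ m →
      A.circ m (A.circ (-1) b (A.circ (-2) c A.one)) γ = 0 := by
    intro m hm
    rw [mode1_odd A hb hDc]
    apply finsum_eq_zero_of_forall_eq_zero
    intro j
    rw [killD c γ (m + (j:ℤ)) (by omega) hcγ', map_zero, hbγ' (j:ℤ) (by omega),
      map_zero, sub_zero]
  -- modes of LS, LE, and L = LS + (1/2)LE
  have hLmap : ∀ (m:ℤ) (x:V), A.circ m (LS + (1/2:ℂ) • LE) x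
      = A.circ m LS x + (1/2:ℂ) • A.circ m LE x := by
    intro m x
    simp [map_add, map_smul]
  have hLSγ : ∀ m:ℤ, 0 ≤ m → A.circ m LS γ = ((1:ℂ) - 2*m) • A.circ (m-2) γ A.one := by
    intro m hm
    rw [hLS']
    simp only [map_add, map_smul, LinearMap.add_apply, LinearMap.smul_apply]
    rw [p1γ m hm, p2γ m hm]
    module
  have hLSc : ∀ m:ℤ, 0 ≤ m → A.circ m LS c = 0 := by
    intro m hm
    rw [hLS']
    simp only [map_add, map_smul, LinearMap.add_apply, LinearMap.smul_apply]
    rw [p1c m hm, p2c m hm]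
    simp
  have hLEc : ∀ m:ℤ, 0 ≤ m → A.circ m LE c = ((1:ℂ) - 2*m) • A.circ (m-2) c A.one := by
    intro m hm
    rw [hLE']
    simp only [map_sub, map_neg, map_smul, LinearMap.sub_apply, LinearMap.neg_apply,
      LinearMap.smul_apply]
    rw [p3c m hm, p4c m hm]
    module
  have hLEβ : ∀ m:ℤ, 0 ≤ m → A.circ m LE β = 0 := by
    intro m hm
    rw [hLE']
    simp only [map_sub, map_neg, map_smul, LinearMap.sub_apply, LinearMap.neg_apply,
      LinearMap.smul_apply]
    rw [p3β m hm, p4β m hm]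
    simp
  have hLEγ : ∀ m:ℤ, 0 ≤ m → A.circ m LE γ = 0 := by
    intro m hm
    rw [hLE']
    simp only [map_sub, map_neg, map_smul, LinearMap.sub_apply, LinearMap.neg_apply,
      LinearMap.smul_apply]
    rw [p3γ m hm, p4γ m hm]
    simp
  have hLγm : ∀ m:ℤ, 0 ≤ m → A.circ m (LS + (1/2:ℂ) • LE) γ
      = ((1:ℂ) - 2*m) • A.circ (m-2) γ A.one := by
    intro m hm
    rw [hLmap, hLSγ m hm, hLEγ m hm]
    simp
  have hLcm : ∀ m:ℤ, 0 ≤ m → A.circ m (LS + (1/2:ℂ) • LE) c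
      = ((1/2:ℂ) - m) • A.circ (m-2) c A.one := by
    intro m hm
    rw [hLmap, hLSc m hm, hLEc m hm]
    module
  have hLβ0 : A.circ 0 (LS + (1/2:ℂ) • LE) β = A.circ (-2) β A.one := by
    rw [hLmap, hLEβ 0 le_rfl, hLS']
    simp only [map_add, map_smul, LinearMap.add_apply, LinearMap.smul_apply]
    rw [p1β 0 le_rfl, p2β0, hγβ0, map_neg]
    module
  have hLβ1 : A.circ 1 (LS + (1/2:ℂ) • LE) β = (2:ℂ) • β := by
    rw [hLmap, hLEβ 1 (by norm_num), hLS']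
    simp only [map_add, map_smul, LinearMap.add_apply, LinearMap.smul_apply]
    rw [p1β 1 (by norm_num), p2β1, hγβ 1 le_rfl, map_zero]
    module
  have hLβ2 : ∀ m:ℤ, 2 ≤ m → A.circ m (LS + (1/2:ℂ) • LE) β = 0 := by
    intro m hm
    rw [hLmap, hLEβ m (by omega), hLS']
    simp only [map_add, map_smul, LinearMap.add_apply, LinearMap.smul_apply]
    rw [p1β m (by omega), p2β2 m hm, hγβ m (by omega), map_zero]
    simp
  -- ================= action of Q on generators =================
  have hQγ : A.circ 0 J γ = A.circ (-1) c (A.circ (-2) γ A.one) - A.circ (-2) c γ := by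
    rw [hJ', map_add, LinearMap.add_apply, map_smul, LinearMap.smul_apply,
      killD0, smul_zero, add_zero]
    rw [mode1_even A (Or.inl hLve), finsum_range _ 2 ?_]
    · rw [Finset.sum_range_succ, Finset.sum_range_succ, Finset.sum_range_zero]
      simp only [Nat.cast_zero, Nat.cast_one, add_zero, sub_zero, zero_add]
      rw [hcγ' 0 le_rfl, map_zero, hcγ' 1 (by norm_num), map_zero,
        hLγm 0 le_rfl, hLγm 1 (by norm_num)]
      norm_num
      rw [A.unit_right_wick γ]
      module
    · intro j hj
      rw [hcγ' (0 + (j:ℤ)) (by omega), map_zero, hLγm (j:ℤ) (by omega),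
        A.unit_right_nonneg ((j:ℤ)-2) γ (by omega), smul_zero, map_zero, add_zero]
  have hQβ : A.circ 0 J β
      = A.circ (-1) c (A.circ (-2) β A.one) + (2:ℂ) • A.circ (-2) c β := by
    rw [hJ', map_add, LinearMap.add_apply, map_smul, LinearMap.smul_apply,
      killD0, smul_zero, add_zero]
    rw [mode1_even A (Or.inl hLve), finsum_range _ 2 ?_]
    · rw [Finset.sum_range_succ, Finset.sum_range_succ, Finset.sum_range_zero]
      simp only [Nat.cast_zero, Nat.cast_one, add_zero, sub_zero, zero_add]
      rw [hcβ' 0 le_rfl, map_zero, hcβ' 1 (by norm_num), map_zero,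
        hLβ0, hLβ1]
      norm_num
      try module
    · intro j hj
      rw [hcβ' (0 + (j:ℤ)) (by omega), map_zero, hLβ2 (j:ℤ) (by omega),
        map_zero, add_zero]
  have hQc : A.circ 0 J c
      = (1/2:ℂ) • A.circ (-1) c (A.circ (-2) c A.one)
        - (1/2:ℂ) • A.circ (-2) c c := by
    rw [hJ', map_add, LinearMap.add_apply, map_smul, LinearMap.smul_apply,
      killD0, smul_zero, add_zero]
    rw [mode1_even A (Or.inl hLve), finsum_range _ 2 ?_]
    · rw [Finset.sum_range_succ, Finset.sum_range_succ, Finset.sum_range_zero]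
      simp only [Nat.cast_zero, Nat.cast_one, add_zero, sub_zero, zero_add]
      rw [hcc 0 le_rfl, map_zero, hcc 1 (by norm_num), map_zero,
        hLcm 0 le_rfl, hLcm 1 (by norm_num)]
      norm_num
      rw [A.unit_right_wick c]
      module
    · intro j hj
      rw [hcc (0 + (j:ℤ)) (by omega), map_zero, hLcm (j:ℤ) (by omega),
        A.unit_right_nonneg ((j:ℤ)-2) c (by omega), smul_zero, map_zero, add_zero]
  have hQ1 : A.circ 0 J A.one = 0 := A.unit_right_nonneg 0 J le_rfl
  -- ================= expansions at negative modes =================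
  have e1 : A.circ (-1) (A.circ (-1) c (A.circ (-2) c A.one)) (A.circ (-1) β γ)
      = A.circ (-1) c (A.circ (-2) c (A.circ (-1) β γ)) := by
    rw [mode1_odd A hc hDc, finsum_range _ 1 ?_]
    · rw [Finset.sum_range_succ, Finset.sum_range_zero]
      simp only [Nat.cast_zero, add_zero, sub_zero, zero_add]
      rw [hcu 0 le_rfl, map_zero, sub_zero, D_mode]
      norm_num
    · intro j hj
      rw [hcu (j:ℤ) (by omega), map_zero, sub_zero, D_mode]
      by_cases hj1 : j = 1
      · subst hj1; norm_num
      · rw [hcu (-1 + (j:ℤ) - 1) (by omega), smul_zero, map_zero]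
  have e2 : A.circ (-1) (A.circ (-2) c c) (A.circ (-1) β γ)
      = A.circ (-2) c (A.circ (-1) c (A.circ (-1) β γ)) := by
    rw [mode2_odd A hc hc, finsum_range _ 1 ?_]
    · rw [Finset.sum_range_succ, Finset.sum_range_zero]
      simp only [Nat.cast_zero, add_zero, sub_zero, zero_add]
      rw [hcu 0 le_rfl, map_zero, add_zero]
      norm_num
    · intro j hj
      rw [hcu (-1 + (j:ℤ)) (by omega), map_zero, hcu (j:ℤ) (by omega), map_zero,
        add_zero, smul_zero]
  have e3 : A.circ (-2) (A.circ (-1) c (A.circ (-2) c A.one)) A.one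
      = (2:ℂ) • A.circ (-1) c (A.circ (-3) c A.one)
        + A.circ (-2) c (A.circ (-2) c A.one) := by
    rw [mode1_odd A hc hDc, finsum_range _ 3 ?_]
    · rw [Finset.sum_range_succ, Finset.sum_range_succ, Finset.sum_range_succ,
        Finset.sum_range_zero]
      simp only [Nat.cast_zero, Nat.cast_one, Nat.cast_ofNat, add_zero, sub_zero, zero_add]
      rw [A.unit_right_nonneg 0 c le_rfl, map_zero, sub_zero,
        A.unit_right_nonneg 1 c (by norm_num), map_zero, sub_zero,
        A.unit_right_nonneg 2 c (by norm_num), map_zero, sub_zero, D_mode, D_mode, D_mode]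
      norm_num
      try module
    · intro j hj
      rw [A.unit_right_nonneg (j:ℤ) c (by omega), map_zero, sub_zero, D_mode,
        A.unit_right_nonneg (-2 + (j:ℤ) - 1) c (by omega), smul_zero, map_zero]
  have e4 : A.circ (-2) (A.circ (-2) c c) A.one
      = A.circ (-2) c (A.circ (-2) c A.one) + (2:ℂ) • A.circ (-3) c c := by
    rw [mode2_odd A hc hc, finsum_range _ 2 ?_]
    · rw [Finset.sum_range_succ, Finset.sum_range_succ, Finset.sum_range_zero]
      simp only [Nat.cast_zero, Nat.cast_one, add_zero, sub_zero, zero_add]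
      rw [A.unit_right_nonneg 0 c le_rfl, map_zero, add_zero,
        A.unit_right_nonneg 1 c (by norm_num), map_zero, add_zero]
      norm_num
      try rw [A.unit_right_wick c]
      try module
    · intro j hj
      rw [A.unit_right_nonneg (-2 + (j:ℤ)) c (by omega), map_zero,
        A.unit_right_nonneg (j:ℤ) c (by omega), map_zero, add_zero, smul_zero]
  have e5 : A.circ (-1) (A.circ (-1) c (A.circ (-2) β A.one)) γ
      = A.circ (-1) c (A.circ (-2) β γ) - A.circ (-3) c A.one := by
    rw [mode1_even A (Or.inr hDβ), finsum_range _ 3 ?_]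
    · rw [Finset.sum_range_succ, Finset.sum_range_succ, Finset.sum_range_succ,
        Finset.sum_range_zero]
      simp only [Nat.cast_zero, Nat.cast_one, Nat.cast_ofNat, add_zero, sub_zero, zero_add]
      rw [hcγ' 0 le_rfl, map_zero, add_zero, hcγ' 1 (by norm_num), map_zero, add_zero,
        hcγ' 2 (by norm_num), map_zero, add_zero, D_mode, D_mode, D_mode]
      norm_num
      try rw [hβγ0]
      try module
    · intro j hj
      rw [hcγ' (j:ℤ) (by omega), map_zero, add_zero, D_mode,
        hβγ (-1 + (j:ℤ) - 1) (by omega), smul_zero, map_zero]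
  have e6 : A.circ (-1) (A.circ (-2) c β) γ
      = A.circ (-2) c (A.circ (-1) β γ) + (2:ℂ) • A.circ (-3) c A.one := by
    rw [mode2_even A (Or.inr hβ), finsum_range _ 2 ?_]
    · rw [Finset.sum_range_succ, Finset.sum_range_succ, Finset.sum_range_zero]
      simp only [Nat.cast_zero, Nat.cast_one, add_zero, sub_zero, zero_add]
      rw [hcγ' 0 le_rfl, map_zero, sub_zero, hcγ' 1 (by norm_num), map_zero, sub_zero]
      norm_num
      try rw [hβγ0]
      try module
    · intro j hj
      rw [hβγ (-1 + (j:ℤ)) (by omega), map_zero, hcγ' (j:ℤ) (by omega), map_zero,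
        sub_zero, smul_zero]
  -- ================= assembly =================
  have hQU : A.circ 0 J (A.circ (-1) β γ)
      = A.circ (-1) (A.circ 0 J β) γ + A.circ (-1) β (A.circ 0 J γ) :=
    Qd_even A J hβ (-1) γ
  have hT1 : A.circ (-1) (A.circ 0 J c) (A.circ (-1) β γ)
      = -(A.circ (-2) c (A.circ (-1) c (A.circ (-1) β γ))) := by
    rw [hQc]
    simp only [map_sub, map_smul, LinearMap.sub_apply, LinearMap.smul_apply]
    rw [e1, e2, hanti (-1) (-2) (A.circ (-1) β γ)]
    module
  have hQuv : A.circ 0 J (A.circ (-1) β γ)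
      = A.circ (-1) c (A.circ (-2) β γ)
        + A.circ (-1) c (A.circ (-1) β (A.circ (-2) γ A.one))
        + A.circ (-2) c (A.circ (-1) β γ)
        + (3:ℂ) • A.circ (-3) c A.one := by
    rw [hQU, hQβ, hQγ]
    simp only [map_add, map_sub, map_smul, LinearMap.add_apply, LinearMap.sub_apply,
      LinearMap.smul_apply]
    rw [e5, e6, hβcomm (-1) (-1) (A.circ (-2) γ A.one), hβcomm (-1) (-2) γ]
    module
  have hT2 : A.circ (-1) c (A.circ 0 J (A.circ (-1) β γ))
      = -(A.circ (-2) c (A.circ (-1) c (A.circ (-1) β γ))) - (3:ℂ) • A.circ (-3) c c := by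
    rw [hQuv]
    simp only [map_add, map_smul]
    rw [hsq (-1) (A.circ (-2) β γ), hsq (-1) (A.circ (-1) β (A.circ (-2) γ A.one)),
      hanti (-1) (-2) (A.circ (-1) β γ), hanti (-1) (-3) A.one, A.unit_right_wick c]
    module
  have hT3 : A.circ (-2) (A.circ 0 J c) A.one = -((2:ℂ) • A.circ (-3) c c) := by
    rw [hQc]
    simp only [map_sub, map_smul, LinearMap.sub_apply, LinearMap.smul_apply]
    rw [e3, e4, hanti (-1) (-3) A.one, A.unit_right_wick c]
    module
  rw [hy']
  simp only [map_add, map_smul]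
  rw [Qd_odd A hJo hc (-1) (A.circ (-1) β γ), Qd_odd A hJo hc (-2) A.one, hQ1,
    map_zero, hT1, hT2, hT3]
  module
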